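/- Let n be a positive natural number and let Δ : M_n(ℂ) → M_n(ℂ) be a 2-local inner derivation on the algebra M_n(ℂ) of n×n complex matrices. Then there exists a single matrix a ∈ M_n(ℂ) such that Δ(x) = a·x − x·a for all x ∈ M_n(ℂ); in particular Δ is itself an inner derivation. -/

import Mathlib

/-!
Since `trace (a * x * y) = trace (x * y * a)`, a 2-local inner derivation `Δ` is skew for the
trace form, `trace (Δ x * y) = -trace (x * Δ y)`, and nondegeneracy of that form makes `Δ`
linear. Subtract from `Δ` the inner derivation implemented jointly at a diagonal matrix `D`
with distinct entries and at the all-ones matrix `J`; the difference `Δ'` is again a 2-local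
inner derivation and kills `D` and `J`. An implementer of `Δ'` at `D` commutes with `D`, hence
is diagonal, so the `(i, j)` entry of `Δ' y` is a multiple of `y i j`; by linearity it is
`μ i j * y i j` for a constant `μ i j`, and `Δ' J = 0` forces `μ = 0`.
-/

open Matrix

def IsTwoLocalInnerDerivation {A : Type*} [Ring A] (Δ : A → A) : Prop :=
  ∀ x y, ∃ a, Δ x = a * x - x * a ∧ Δ y = a * y - y * a

namespace IsTwoLocalInnerDerivation

theorem sub_commutator {A : Type*} [Ring A] {Δ : A → A} (hΔ : IsTwoLocalInnerDerivation Δ)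
    (c : A) : IsTwoLocalInnerDerivation fun x => Δ x - (c * x - x * c) := by
  intro x y
  obtain ⟨a, hx, hy⟩ := hΔ x y
  exact ⟨a - c, by simp only [hx]; noncomm_ring, by simp only [hy]; noncomm_ring⟩

variable {m R : Type*} [Fintype m] [DecidableEq m] [CommRing R]
  {Δ : Matrix m m R → Matrix m m R}

theorem trace_mul_eq_neg (hΔ : IsTwoLocalInnerDerivation Δ) (x y : Matrix m m R) :
    trace (Δ x * y) = -trace (x * Δ y) := by
  obtain ⟨a, hx, hy⟩ := hΔ x y
  have hcycle : trace (a * x * y) = trace (x * y * a) := by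
    rw [mul_assoc, trace_mul_comm]
  rw [hx, hy]
  simp only [sub_mul, mul_sub, trace_sub, ← mul_assoc]
  linear_combination hcycle

theorem map_add (hΔ : IsTwoLocalInnerDerivation Δ) (x y : Matrix m m R) :
    Δ (x + y) = Δ x + Δ y := by
  refine ext_iff_trace_mul_right.mpr fun z => ?_
  rw [add_mul, trace_add, hΔ.trace_mul_eq_neg, hΔ.trace_mul_eq_neg, hΔ.trace_mul_eq_neg,
    add_mul, trace_add, neg_add]

theorem map_smul (hΔ : IsTwoLocalInnerDerivation Δ) (c : R) (x : Matrix m m R) :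
    Δ (c • x) = c • Δ x := by
  refine ext_iff_trace_mul_right.mpr fun z => ?_
  rw [smul_mul_assoc, trace_smul, hΔ.trace_mul_eq_neg, hΔ.trace_mul_eq_neg, smul_mul_assoc,
    trace_smul, smul_neg]

def toLinearMap (hΔ : IsTwoLocalInnerDerivation Δ) : Matrix m m R →ₗ[R] Matrix m m R where
  toFun := Δ
  map_add' := hΔ.map_add
  map_smul' := hΔ.map_smul

@[simp]
theorem coe_toLinearMap (hΔ : IsTwoLocalInnerDerivation Δ) : ⇑hΔ.toLinearMap = Δ := rfl

end IsTwoLocalInnerDerivation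

namespace Matrix

variable {m R : Type*} [DecidableEq m]

theorem linearMap_apply_eq_apply_single_mul [CommRing R]
    (f : Matrix m m R →ₗ[R] Matrix m m R) {i j : m}
    (hf : ∀ y, ∃ c, f y i j = c * y i j) (y : Matrix m m R) :
    f y i j = f (single i j 1) i j * y i j := by
  have hsplit : y = (y - y i j • single i j 1) + y i j • single i j 1 := by abel
  obtain ⟨c, hc⟩ := hf (y - y i j • single i j 1)
  conv_lhs => rw [hsplit, map_add, add_apply, hc, map_smul]
  simp [mul_comm]

variable [Fintype m]

theorem isDiag_of_commute_diagonal [CommRing R] [NoZeroDivisors R] {d : m → R}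
    (hd : Function.Injective d) {b : Matrix m m R} (h : Commute b (diagonal d)) : b.IsDiag := by
  intro i j hij
  have hij' := congr_fun₂ h.eq i j
  rw [mul_diagonal, diagonal_mul] at hij'
  have : b i j * (d j - d i) = 0 := by linear_combination hij'
  exact (mul_eq_zero.mp this).resolve_right (sub_ne_zero.mpr (hd.ne hij).symm)

theorem commutator_diagonal_apply [CommRing R] (e : m → R) (y : Matrix m m R) (i j : m) :
    (diagonal e * y - y * diagonal e) i j = (e i - e j) * y i j := by
  rw [sub_apply, diagonal_mul, mul_diagonal]
  ring

end Matrix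

namespace IsTwoLocalInnerDerivation

variable {m R : Type*} [Fintype m] [DecidableEq m] [CommRing R] [NoZeroDivisors R]
  {Δ : Matrix m m R → Matrix m m R}

theorem exists_mul_apply_of_apply_diagonal_eq_zero (hΔ : IsTwoLocalInnerDerivation Δ)
    {d : m → R} (hd : Function.Injective d) (hD : Δ (diagonal d) = 0) (y : Matrix m m R)
    (i j : m) : ∃ c, Δ y i j = c * y i j := by
  obtain ⟨b, hbD, hby⟩ := hΔ (diagonal d) y
  have hb : b.IsDiag := isDiag_of_commute_diagonal hd (sub_eq_zero.mp (hbD.symm.trans hD))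
  refine ⟨b i i - b j j, ?_⟩
  simpa [hby, hb.diagonal_diag] using commutator_diagonal_apply b.diag y i j

theorem eq_zero_of_apply_diagonal_eq_zero_of_apply_ones_eq_zero
    (hΔ : IsTwoLocalInnerDerivation Δ) {d : m → R} (hd : Function.Injective d)
    (hD : Δ (diagonal d) = 0) (hJ : Δ (of fun _ _ => 1) = 0) : Δ = 0 := by
  funext y
  ext i j
  have hentry := linearMap_apply_eq_apply_single_mul hΔ.toLinearMap
    (fun y => hΔ.exists_mul_apply_of_apply_diagonal_eq_zero hd hD y i j)
  have hμ : Δ (single i j 1) i j = 0 := by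
    simpa [hJ] using (hentry (of fun _ _ => 1)).symm
  exact (hentry y).trans (by simp [hμ])

theorem exists_eq_commutator (hΔ : IsTwoLocalInnerDerivation Δ) {d : m → R}
    (hd : Function.Injective d) : ∃ a, ∀ x, Δ x = a * x - x * a := by
  obtain ⟨a, hD, hJ⟩ := hΔ (diagonal d) (of fun _ _ => 1)
  have hzero := (hΔ.sub_commutator a).eq_zero_of_apply_diagonal_eq_zero_of_apply_ones_eq_zero hd
    (sub_eq_zero.mpr hD) (sub_eq_zero.mpr hJ)
  exact ⟨a, fun x => sub_eq_zero.mp (congr_fun hzero x)⟩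

end IsTwoLocalInnerDerivation

theorem twoLocal_inner_derivation_is_inner_Mn_general
    (n : ℕ)
    (Δ : Matrix (Fin n) (Fin n) ℂ → Matrix (Fin n) (Fin n) ℂ)
    (h2loc : ∀ x y : Matrix (Fin n) (Fin n) ℂ, ∃ a : Matrix (Fin n) (Fin n) ℂ,
      Δ x = a * x - x * a ∧ Δ y = a * y - y * a) :
    ∃ a : Matrix (Fin n) (Fin n) ℂ, ∀ x, Δ x = a * x - x * a :=
  IsTwoLocalInnerDerivation.exists_eq_commutator h2loc
    (d := fun i : Fin n => ((i : ℕ) : ℂ)) (Nat.cast_injective.comp Fin.val_injective)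

/-- Every 2-local inner derivation on `Mₙ(ℂ)` is an inner derivation: a single
implementing matrix can be chosen uniformly for all arguments. -/
theorem twoLocal_inner_derivation_is_inner_Mn
    (n : ℕ) (hn : 0 < n)
    (Δ : Matrix (Fin n) (Fin n) ℂ → Matrix (Fin n) (Fin n) ℂ)
    (h2loc : ∀ x y : Matrix (Fin n) (Fin n) ℂ, ∃ a : Matrix (Fin n) (Fin n) ℂ,
      Δ x = a * x - x * a ∧ Δ y = a * y - y * a) :
    ∃ a : Matrix (Fin n) (Fin n) ℂ, ∀ x, Δ x = a * x - x * a :=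
  twoLocal_inner_derivation_is_inner_Mn_general n Δ h2loc
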